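/- arXiv:1509.07528 — 3 statements merged into one kernel-verified Lean document; each statement's English description precedes it below -/
import Mathlib

section
/- Let R be a GCD domain, and a, b ∈ R nonzero. Then the syzygy module syz(a,b) = {(x,y) ∈ R² ∣ xa + yb = 0} is a free R-module of rank 1 generated by (lcm(a,b)/a, −lcm(a,b)/b). -/
/-- In a GCD domain, for nonzero `a, b`, the syzygy module
`{(x,y) ∣ xa + yb = 0}` is free of rank one, generated by
`(lcm(a,b)/a, −lcm(a,b)/b)`. -/
theorem syz_two_free_rank_one {R : Type*} [CommRing R] [IsDomain R] [GCDMonoid R]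
    (a b : R) (ha : a ≠ 0) (hb : b ≠ 0) :
    ∃ q₁ q₂ : R, q₁ * a = lcm a b ∧ q₂ * b = lcm a b ∧
      ∀ x y : R, x * a + y * b = 0 ↔ ∃! r : R, x = r * q₁ ∧ y = r * (-q₂) := by
  obtain ⟨q₁, hq₁⟩ := (dvd_lcm_left a b)
  obtain ⟨q₂, hq₂⟩ := (dvd_lcm_right a b)
  have hlcm : lcm a b ≠ 0 := by
    intro h; rcases lcm_eq_zero_iff a b |>.mp h with h|h <;> [exact ha h; exact hb h]
  have hq₁ne : q₁ ≠ 0 := by rintro rfl; rw [mul_zero] at hq₁; exact hlcm hq₁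
  refine ⟨q₁, q₂, by rw [hq₁, mul_comm], by rw [hq₂, mul_comm], fun x y => ?_⟩
  constructor
  · intro h
    have hb' : b ∣ x * a := ⟨-y, by linear_combination h⟩
    have ha' : a ∣ x * a := ⟨x, mul_comm x a⟩
    obtain ⟨r, hr⟩ := lcm_dvd ha' hb'
    have hx : x = r * q₁ := by
      apply mul_right_cancel₀ ha
      rw [hr, hq₁]; ring
    have hy : y = r * (-q₂) := by
      apply mul_right_cancel₀ hb
      have : y * b = -(x * a) := by linear_combination h
      rw [this, hr, hq₂]; ring
    refine ⟨r, ⟨hx, hy⟩, ?_⟩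
    rintro r' ⟨hx', _⟩
    have := hx.symm.trans hx'
    exact (mul_right_cancel₀ hq₁ne this).symm
  · rintro ⟨r, ⟨hx, hy⟩, -⟩
    have h1 : q₁ * a = lcm a b := by rw [hq₁, mul_comm]
    have h2 : q₂ * b = lcm a b := by rw [hq₂, mul_comm]
    rw [hx, hy]
    linear_combination r * h1 - r * h2
end

section
/- Let p be a prime number. The quotient ring ℤ⟦t⟧/⟨p − t⟩ is isomorphic to the ring ℤ_p of p-adic integers, via the map induced by evaluating t at p. -/
/-!
Once `ℤ_[p]` is seen to be linearly topologized (by the ideals `pⁿℤ_[p]`), evaluation at the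
topologically nilpotent element `p` is Mathlib's `PowerSeries.eval₂Hom`. Every `x : ℤ_[p]` is the
sum of the telescoping series `∑ (appr x (n+1) - appr x n)`, whose `n`-th term is an integer
multiple of `pⁿ`; this gives surjectivity. If `f(p) = 0`, each partial sum `sₙ = ∑_{i<n} aᵢpⁱ` is
`-pⁿ` times the value of a tail of `f`, so `pⁿ ∣ sₙ` in `ℤ`, and then
`f = (p - X) · ∑ (sₙ₊₁ / pⁿ⁺¹) Xⁿ`.
-/

open Filter Topology PowerSeries

namespace PowerSeries

theorem mem_span_C_sub_X_of_pow_dvd {R : Type*} [CommRing R] {r : R} (hr : IsLeftRegular r)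
    {f : PowerSeries R} (hf : ∀ n, r ^ n ∣ ∑ i ∈ Finset.range n, coeff i f * r ^ i) :
    f ∈ Ideal.span {C r - X} := by
  choose c hc using fun n ↦ hf (n + 1)
  refine Ideal.mem_span_singleton.mpr ⟨mk c, ?_⟩
  ext n
  rw [sub_mul, map_sub, coeff_C_mul, coeff_mk]
  cases n with
  | zero => simpa using hc 0
  | succ n =>
    rw [coeff_succ_X_mul, coeff_mk]
    apply hr.pow (n + 1)
    have h := hc (n + 1)
    rw [Finset.sum_range_succ, hc n] at h
    linear_combination h

end PowerSeries

namespace PadicInt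

variable {p : ℕ} [hp : Fact p.Prime]

theorem hasBasis_nhds_zero_span_pow :
    (𝓝 (0 : ℤ_[p])).HasBasis (fun _ ↦ True)
      fun n : ℕ ↦ (Ideal.span {(p : ℤ_[p]) ^ n} : Set ℤ_[p]) := by
  convert Metric.nhds_basis_closedBall_pow (x := (0 : ℤ_[p])) (r := (p : ℝ)⁻¹)
    (inv_pos.mpr (mod_cast hp.out.pos)) (inv_lt_one_of_one_lt₀ (mod_cast hp.out.one_lt))
    using 2 with n
  ext x
  simp [← norm_le_pow_iff_mem_span_pow, inv_pow, zpow_neg]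

instance : IsLinearTopology ℤ_[p] ℤ_[p] :=
  IsLinearTopology.mk_of_hasBasis ℤ_[p] hasBasis_nhds_zero_span_pow

theorem tendsto_appr (x : ℤ_[p]) : Tendsto (fun n ↦ (x.appr n : ℤ_[p])) atTop (𝓝 x) := by
  have : Tendsto (fun n ↦ x - x.appr n) atTop (𝓝 0) :=
    hasBasis_nhds_zero_span_pow.tendsto_right_iff.mpr fun n _ ↦ eventually_atTop.mpr
      ⟨n, fun m hm ↦ Ideal.span_singleton_le_span_singleton.mpr (pow_dvd_pow _ hm)
        (appr_spec m x)⟩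
  simpa using this.const_sub x

theorem hasEval_p : HasEval (p : ℤ_[p]) :=
  tendsto_pow_atTop_nhds_zero_of_norm_lt_one
    (norm_p (p := p) ▸ inv_lt_one_of_one_lt₀ (mod_cast hp.out.one_lt))

variable (p) in
noncomputable def evalPowerSeries : PowerSeries ℤ →+* ℤ_[p] :=
  eval₂Hom (φ := Int.castRingHom ℤ_[p]) continuous_of_discreteTopology hasEval_p

theorem hasSum_evalPowerSeries (f : PowerSeries ℤ) :
    HasSum (fun n ↦ (coeff (R := ℤ) n f : ℤ_[p]) * (p : ℤ_[p]) ^ n) (evalPowerSeries p f) := by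
  simpa [evalPowerSeries, coe_eval₂Hom] using
    hasSum_eval₂ (φ := Int.castRingHom ℤ_[p]) continuous_of_discreteTopology hasEval_p f

theorem appr_succ_sub_appr_div_mul (x : ℤ_[p]) (n : ℕ) :
    (((x.appr (n + 1) - x.appr n) / p ^ n : ℕ) : ℤ_[p]) * (p : ℤ_[p]) ^ n =
      x.appr (n + 1) - x.appr n := by
  rw [← Nat.cast_pow, ← Nat.cast_mul, Nat.div_mul_cancel (dvd_appr_sub_appr x n _ n.le_succ),
    Nat.cast_sub (appr_mono x n.le_succ)]

theorem evalPowerSeries_surjective : Function.Surjective (evalPowerSeries p) := by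
  intro x
  let f : PowerSeries ℤ := mk fun n ↦ ((x.appr (n + 1) - x.appr n) / p ^ n : ℕ)
  have partial_sum_eq_appr (N : ℕ) :
      ∑ i ∈ Finset.range N, ((coeff i f : ℤ) : ℤ_[p]) * (p : ℤ_[p]) ^ i = x.appr N := by
    simp only [f, coeff_mk, Int.cast_natCast, appr_succ_sub_appr_div_mul,
      Finset.sum_range_sub (fun n ↦ (x.appr n : ℤ_[p]))]
    simp [appr]
  refine ⟨f, tendsto_nhds_unique (hasSum_evalPowerSeries f).tendsto_sum_nat ?_⟩
  simpa only [partial_sum_eq_appr] using tendsto_appr x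

theorem pow_dvd_sum_of_evalPowerSeries_eq_zero {f : PowerSeries ℤ}
    (hf : evalPowerSeries p f = 0) (n : ℕ) :
    (p : ℤ) ^ n ∣ ∑ i ∈ Finset.range n, coeff i f * (p : ℤ) ^ i := by
  let tail : PowerSeries ℤ := mk fun i ↦ coeff (i + n) f
  have h₁ := (hasSum_nat_add_iff' n).mpr (hasSum_evalPowerSeries (p := p) f)
  have h₂ := (hasSum_evalPowerSeries (p := p) tail).mul_right ((p : ℤ_[p]) ^ n)
  simp only [tail, coeff_mk, mul_assoc, ← pow_add, hf, zero_sub] at h₁ h₂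
  rw [← pow_p_dvd_int_iff]
  push_cast
  rw [neg_eq_iff_eq_neg.mp (h₁.unique h₂)]
  exact (dvd_mul_left _ _).neg_right

theorem ker_evalPowerSeries :
    RingHom.ker (evalPowerSeries p) = Ideal.span {(p : PowerSeries ℤ) - X} := by
  refine le_antisymm (fun f hf ↦ ?_) ?_
  · rw [← map_natCast (C (R := ℤ))]
    exact mem_span_C_sub_X_of_pow_dvd (IsRegular.of_ne_zero (NeZero.ne (p : ℤ))).left
      (pow_dvd_sum_of_evalPowerSeries_eq_zero hf)
  · rw [Ideal.span_le, Set.singleton_subset_iff, SetLike.mem_coe, RingHom.mem_ker, map_sub,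
      map_natCast, evalPowerSeries, coe_eval₂Hom, eval₂_X, sub_self]

end PadicInt

/-- Evaluation of power series at `t = p` gives a surjective ring homomorphism
`ℤ⟦t⟧ → ℤ_p` with kernel `⟨p − t⟩`; hence `ℤ⟦t⟧/⟨p − t⟩ ≅ ℤ_p`. -/
theorem powerSeries_quotient_iso_padicInt (p : ℕ) [Fact p.Prime] :
    ∃ φ : PowerSeries ℤ →+* ℤ_[p],
      (∀ f : PowerSeries ℤ,
        φ f = ∑' n : ℕ, ((PowerSeries.coeff (R := ℤ) n f : ℤ_[p]) * (p : ℤ_[p]) ^ n)) ∧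
      Function.Surjective φ ∧
      RingHom.ker φ = Ideal.span {(p : PowerSeries ℤ) - PowerSeries.X} :=
  ⟨PadicInt.evalPowerSeries p, fun f ↦ (PadicInt.hasSum_evalPowerSeries f).tsum_eq.symm,
    PadicInt.evalPowerSeries_surjective, PadicInt.ker_evalPowerSeries⟩
end

section
/- Let R = ℤ and let c₁, …, c_k ∈ ℤ with b ∈ ⟨c₁,…,c_k⟩. Then there exist a₁, …, a_k ∈ ℤ with b = a₁c₁ + … + a_k c_k such that for each i, either aᵢcᵢ = 0 or aᵢcᵢ ∉ ⟨c₁,…,c_{i−1}⟩. -/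
/-!
Induct on the number of generators. If `b` already lies in the span of the first `k - 1`
generators, take `a_k = 0`; otherwise write `b = t c_k + z` with `z` in that span and recurse on
`z`. Then `t c_k` is not in the span of the earlier generators, for otherwise `b` would be.
-/

open Set Submodule

namespace Fin

variable {α : Type*} {n : ℕ}

theorem image_Iio_castSucc (c : Fin (n + 1) → α) (i : Fin n) :
    c '' Iio i.castSucc = init c '' Iio i := by
  rw [← image_castSucc_Iio, image_image]; rfl

theorem image_Iio_last (c : Fin (n + 1) → α) : c '' Iio (last n) = range (init c) := by
  have : Iio (last n) = range castSucc := by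
    ext i; simp only [mem_Iio, lt_last_iff_ne_last, mem_range, exists_castSucc_eq]
  rw [this, ← range_comp]; rfl

end Fin

section

variable {R M : Type*} [Semiring R] [AddCommMonoid M] [Module R M]

theorem Submodule.span_range_fin_succ {n : ℕ} (c : Fin (n + 1) → M) :
    span R (range c) = R ∙ c (Fin.last n) ⊔ span R (range (Fin.init c)) := by
  conv_lhs => rw [← Fin.snoc_init_self c, Fin.range_snoc, span_insert]

def ReducedCoeffs {n : ℕ} (c : Fin n → M) (a : Fin n → R) : Prop :=
  ∀ i, a i • c i = 0 ∨ a i • c i ∉ span R (c '' Iio i)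

theorem ReducedCoeffs.snoc {n : ℕ} {c : Fin (n + 1) → M} {a : Fin n → R} {t : R}
    (ha : ReducedCoeffs (Fin.init c) a)
    (ht : t • c (Fin.last n) = 0 ∨ t • c (Fin.last n) ∉ span R (range (Fin.init c))) :
    ReducedCoeffs c (Fin.snoc a t) := by
  intro i
  cases i using Fin.lastCases with
  | last => simpa [Fin.image_Iio_last] using ht
  | cast j =>
    rw [Fin.snoc_castSucc, Fin.image_Iio_castSucc]
    exact ha j

theorem exists_reducedCoeffs_of_mem_span {n : ℕ} (c : Fin n → M) {b : M}
    (hb : b ∈ span R (range c)) : ∃ a : Fin n → R, b = ∑ i, a i • c i ∧ ReducedCoeffs c a := by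
  induction n generalizing b with
  | zero =>
    rw [range_eq_empty, span_empty, mem_bot] at hb
    exact ⟨0, by simp [hb], fun i => i.elim0⟩
  | succ n ih =>
    by_cases hb' : b ∈ span R (range (Fin.init c))
    · obtain ⟨a, rfl, ha⟩ := ih (Fin.init c) hb'
      exact ⟨Fin.snoc a 0, by simp [Fin.sum_univ_castSucc, Fin.init],
        ha.snoc (Or.inl (zero_smul R _))⟩
    · rw [span_range_fin_succ, mem_sup] at hb
      obtain ⟨_, hy, z, hz, rfl⟩ := hb
      obtain ⟨t, rfl⟩ := mem_span_singleton.mp hy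
      obtain ⟨a, rfl, ha⟩ := ih (Fin.init c) hz
      refine ⟨Fin.snoc a t, by simp [Fin.sum_univ_castSucc, Fin.init, add_comm], ha.snoc ?_⟩
      exact Or.inr fun ht => hb' (add_mem ht hz)

end

/-- Division in the ground ring `ℤ`: any `b` in the ideal generated by `c₁,…,c_k` admits a
representation `b = Σ aᵢcᵢ` in which each summand `aᵢcᵢ` is either zero or does not lie in
the ideal generated by the earlier generators. -/
theorem int_division_in_ground_ring {k : ℕ} (c : Fin k → ℤ) (b : ℤ)
    (hb : b ∈ Ideal.span (Set.range c)) :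
    ∃ a : Fin k → ℤ, b = ∑ i, a i * c i ∧
      ∀ i, a i * c i = 0 ∨ a i * c i ∉ Ideal.span (c '' {j | j < i}) := by
  obtain ⟨a, hsum, ha⟩ := exists_reducedCoeffs_of_mem_span c hb
  exact ⟨a, hsum, ha⟩
end
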